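/- arXiv:1909.02286 — 2 statements merged into one kernel-verified Lean document; each statement's English description precedes it below -/
import Mathlib

section
/- Let w be a Hardy weight on Y ⊆ X and g ∈ F(Y) strictly positive. Suppose φ ∈ C_c(Y) satisfies the weak eikonal inequality (1/2)∑_{x,y∈X} b(x,y) φ(x) φ(y) (g^{1/2}(x)−g^{1/2}(y))² ≤ γ ∑_X g w φ² for some 0 < γ < 1. Then (∑_{x ∈ supp φ} (g/w)(x)(Δφ(x))²)^{1/2} ≥ (1−γ)(∑_X g w φ²)^{1/2}. -/
open Real Classical

/-!
Put `ψ = √g φ`. Green's formula and the symmetry of `b` turn the energy of `ψ` into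
`∑ g φ Δφ` plus one half of the eikonal double sum, which by the weak eikonal inequality is at
most `γ ∑ g w φ²`. The Hardy inequality for `ψ` therefore gives
`(1 - γ) ∑ g w φ² ≤ ∑ g φ Δφ`, and the Cauchy–Schwarz inequality with the weights `g / w` and
`g w` bounds the right-hand side by `(∑ (g / w) (Δφ)²)^{1/2} (∑ g w φ²)^{1/2}`.
-/

namespace WeightedGraph

variable {X : Type*} {b : X → X → ℝ} {S : Finset X}

noncomputable def laplacian (b : X → X → ℝ) (f : X → ℝ) (x : X) : ℝ :=
  ∑' y, b x y * (f x - f y)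

lemma summable_mul_sub {f : X → ℝ} (hf : ∀ x ∉ S, f x = 0) {x : X} (hb : Summable (b x)) :
    Summable fun y => b x y * (f x - f y) := by
  have hfin : Summable fun y => b x y * f y :=
    summable_of_ne_finset_zero (s := S) fun y hy => by simp [hf y hy]
  exact ((hb.mul_right (f x)).sub hfin).congr fun y => by ring

/-- Green's formula for finitely supported functions. -/
theorem tsum_half_tsum_mul_sub_sq_eq_sum_mul_laplacian (hsymm : ∀ x y, b x y = b y x)
    (hb : ∀ x, Summable (b x))
    {f : X → ℝ} (hf : ∀ x ∉ S, f x = 0) :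
    ∑' x, (1 / 2) * ∑' y, b x y * (f x - f y) ^ 2 = ∑ x ∈ S, f x * laplacian b f x := by
  have hsplit : ∀ x, ∑' y, b x y * (f x - f y) ^ 2 =
      f x * laplacian b f x + ∑ y ∈ S, f y * (b y x * (f y - f x)) := by
    intro x
    calc ∑' y, b x y * (f x - f y) ^ 2
        = ∑' y, (f x * (b x y * (f x - f y)) + f y * (b y x * (f y - f x))) :=
          tsum_congr fun y => by rw [hsymm y x]; ring
      _ = f x * laplacian b f x + ∑' y, f y * (b y x * (f y - f x)) := by
          rw [Summable.tsum_add ((summable_mul_sub hf (hb x)).mul_left _)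
            (summable_of_ne_finset_zero (s := S) fun y hy => by simp [hf y hy]), tsum_mul_left]
          rfl
      _ = f x * laplacian b f x + ∑ y ∈ S, f y * (b y x * (f y - f x)) := by
          rw [tsum_eq_sum (s := S) fun y hy => by simp [hf y hy]]
  have hsummable : ∀ y, Summable fun x => f y * (b y x * (f y - f x)) :=
    fun y => (summable_mul_sub hf (hb y)).mul_left _
  calc ∑' x, (1 / 2) * ∑' y, b x y * (f x - f y) ^ 2
      = (1 / 2) * (∑' x, f x * laplacian b f x +
          ∑' x, ∑ y ∈ S, f y * (b y x * (f y - f x))) := by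
        simp_rw [hsplit]
        rw [tsum_mul_left, Summable.tsum_add
          (summable_of_ne_finset_zero (s := S) fun x hx => by simp [hf x hx])
          (summable_sum fun y _ => hsummable y)]
    _ = (1 / 2) * (∑ x ∈ S, f x * laplacian b f x + ∑ y ∈ S, f y * laplacian b f y) := by
        rw [tsum_eq_sum (s := S) fun x hx => by simp [hf x hx],
          Summable.tsum_finsetSum fun y _ => hsummable y]
        simp only [tsum_mul_left, laplacian]
    _ = ∑ x ∈ S, f x * laplacian b f x := by ring

lemma sum_sum_eq_half_sum_sum_add_swap (S : Finset X) (F : X → X → ℝ) :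
    ∑ x ∈ S, ∑ y ∈ S, F x y = (1 / 2) * ∑ x ∈ S, ∑ y ∈ S, (F x y + F y x) := by
  simp only [Finset.sum_add_distrib]
  rw [Finset.sum_comm (f := fun x y => F y x)]
  ring

/-- Ground state transform. -/
theorem sum_mul_laplacian_mul (hsymm : ∀ x y, b x y = b y x) (hb : ∀ x, Summable (b x))
    {φ : X → ℝ} (hφ : ∀ x ∉ S, φ x = 0) (u : X → ℝ) :
    ∑ x ∈ S, u x * φ x * laplacian b (fun y => u y * φ y) x =
      ∑ x ∈ S, u x ^ 2 * φ x * laplacian b φ x +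
        (1 / 2) * ∑ x ∈ S, ∑ y ∈ S, b x y * φ x * φ y * (u x - u y) ^ 2 := by
  have hpoint : ∀ x, u x * φ x * laplacian b (fun y => u y * φ y) x =
      u x ^ 2 * φ x * laplacian b φ x + ∑ y ∈ S, b x y * φ x * φ y * (u x * (u x - u y)) := by
    intro x
    calc u x * φ x * laplacian b (fun y => u y * φ y) x
        = ∑' y, (u x ^ 2 * φ x * (b x y * (φ x - φ y)) +
            b x y * φ x * φ y * (u x * (u x - u y))) := by
          rw [laplacian, ← tsum_mul_left]
          exact tsum_congr fun y => by ring
      _ = u x ^ 2 * φ x * laplacian b φ x +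
            ∑ y ∈ S, b x y * φ x * φ y * (u x * (u x - u y)) := by
          rw [Summable.tsum_add ((summable_mul_sub hφ (hb x)).mul_left _)
            (summable_of_ne_finset_zero (s := S) fun y hy => by simp [hφ y hy]), tsum_mul_left,
            tsum_eq_sum (s := S) (f := fun y => b x y * φ x * φ y * (u x * (u x - u y)))
              fun y hy => by simp [hφ y hy]]
          rfl
  rw [Finset.sum_congr rfl fun x _ => hpoint x, Finset.sum_add_distrib,
    sum_sum_eq_half_sum_sum_add_swap]
  congr 2
  refine Finset.sum_congr rfl fun x _ => Finset.sum_congr rfl fun y _ => ?_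
  rw [hsymm y x]
  ring

/-- The Hardy inequality applied to `√g φ`, rewritten by the ground state transform. -/
theorem sum_mul_mul_sq_le_of_hardy (hsymm : ∀ x y, b x y = b y x) (hb : ∀ x, Summable (b x))
    {Y : Set X} {w : X → ℝ}
    (hHardy : ∀ ψ : X → ℝ, (Function.support ψ).Finite →
      Function.support ψ ⊆ Y →
      (∑' x, (1 / 2) * ∑' y, b x y * (ψ x - ψ y) ^ 2)
        ≥ ∑' x, if x ∈ Y then w x * ψ x ^ 2 else 0)
    {g : X → ℝ} (hg : ∀ x ∈ Y, 0 ≤ g x) {φ : X → ℝ} (hφ : ∀ x ∉ S, φ x = 0)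
    (hφY : Function.support φ ⊆ Y) :
    ∑ x ∈ S, g x * w x * φ x ^ 2 ≤ ∑ x ∈ S, g x * φ x * laplacian b φ x +
      (1 / 2) * ∑ x ∈ S, ∑ y ∈ S, b x y * φ x * φ y * (√(g x) - √(g y)) ^ 2 := by
  set ψ : X → ℝ := fun x => √(g x) * φ x
  have hψS : ∀ x ∉ S, ψ x = 0 := fun x hx => by simp [ψ, hφ x hx]
  have hsuppψ : Function.support ψ ⊆ Function.support φ := fun x hx h => hx (by simp [ψ, h])
  have hweight : (∑' x, if x ∈ Y then w x * ψ x ^ 2 else 0) = ∑ x ∈ S, g x * w x * φ x ^ 2 :=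
    calc (∑' x, if x ∈ Y then w x * ψ x ^ 2 else 0) = ∑' x, g x * w x * φ x ^ 2 :=
          tsum_congr fun x => by
            split_ifs with hx
            · rw [mul_pow, Real.sq_sqrt (hg x hx)]; ring
            · simp [show φ x = 0 from by_contra fun h => hx (hφY h)]
      _ = ∑ x ∈ S, g x * w x * φ x ^ 2 := tsum_eq_sum fun x hx => by simp [hφ x hx]
  have hHardyψ := hHardy ψ ((S.finite_toSet).subset fun x hx => by_contra fun h => hx (hψS x h))
    (hsuppψ.trans hφY)
  rw [hweight, tsum_half_tsum_mul_sub_sq_eq_sum_mul_laplacian hsymm hb hψS,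
    sum_mul_laplacian_mul hsymm hb hφ] at hHardyψ
  convert hHardyψ using 3 with x hx
  by_cases hφx : φ x = 0
  · simp [hφx]
  · rw [Real.sq_sqrt (hg x (hφY hφx))]

end WeightedGraph

lemma Finset.sum_mul_mul_le_sqrt_mul_sqrt {ι : Type*} (S : Finset ι) {g w : ι → ℝ}
    (hg : ∀ i ∈ S, 0 ≤ g i) (hw : ∀ i ∈ S, 0 < w i) (φ a : ι → ℝ) :
    ∑ i ∈ S, g i * φ i * a i ≤
      √(∑ i ∈ S, g i / w i * a i ^ 2) * √(∑ i ∈ S, g i * w i * φ i ^ 2) := by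
  have hsq : (∑ i ∈ S, g i * φ i * a i) ^ 2 ≤
      (∑ i ∈ S, g i / w i * a i ^ 2) * ∑ i ∈ S, g i * w i * φ i ^ 2 := by
    refine Finset.sum_sq_le_sum_mul_sum_of_sq_le_mul S
      (fun i hi => by have := hg i hi; have := hw i hi; positivity)
      (fun i hi => by have := hg i hi; have := hw i hi; positivity) fun i hi => le_of_eq ?_
    field_simp [(hw i hi).ne']
  calc ∑ i ∈ S, g i * φ i * a i ≤ |∑ i ∈ S, g i * φ i * a i| := le_abs_self _
    _ ≤ √((∑ i ∈ S, g i / w i * a i ^ 2) * ∑ i ∈ S, g i * w i * φ i ^ 2) :=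
        Real.abs_le_sqrt hsq
    _ = _ := Real.sqrt_mul (Finset.sum_nonneg fun i hi => by
        have := hg i hi; have := hw i hi; positivity) _

lemma Real.mul_sqrt_le_of_mul_le_mul_sqrt {a c N : ℝ} (ha : 0 ≤ a) (hN : 0 ≤ N)
    (h : c * N ≤ a * √N) : c * √N ≤ a := by
  rcases hN.eq_or_lt with rfl | hpos
  · simpa using ha
  refine le_of_mul_le_mul_right ?_ (Real.sqrt_pos.2 hpos)
  rwa [mul_assoc, Real.mul_self_sqrt hN]

theorem stmt3_general
    (X : Type*)
    (b : X → X → ℝ)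
    (hsymm : ∀ x y, b x y = b y x)
    (hloc : ∀ x, Summable (fun y => b x y))
    (Y : Set X)
    (w : X → ℝ) (hw : ∀ x ∈ Y, 0 < w x)
    (hHardy : ∀ ψ : X → ℝ, (Function.support ψ).Finite →
      Function.support ψ ⊆ Y →
      (∑' x, (1 / 2) * ∑' y, b x y * (ψ x - ψ y) ^ 2)
        ≥ ∑' x, if x ∈ Y then w x * ψ x ^ 2 else 0)
    (g : X → ℝ) (hg : ∀ x ∈ Y, 0 < g x)
    (γ : ℝ)
    (φ : X → ℝ) (hφ : (Function.support φ).Finite)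
    (hφY : Function.support φ ⊆ Y)
    (hweak : (1 / 2) * (∑' x, ∑' y,
        b x y * φ x * φ y * (Real.sqrt (g x) - Real.sqrt (g y)) ^ 2)
      ≤ γ * ∑' x, g x * w x * φ x ^ 2) :
    Real.sqrt (∑' x, if φ x = 0 then 0 else
        (g x / w x) * (∑' y, b x y * (φ x - φ y)) ^ 2)
      ≥ (1 - γ) * Real.sqrt (∑' x, g x * w x * φ x ^ 2) := by
  set S := hφ.toFinset
  have hS : ∀ x ∉ S, φ x = 0 := by simp [S]
  have hSY : ∀ x ∈ S, x ∈ Y := fun x hx => hφY (by simpa [S] using hx)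
  have hgS : ∀ x ∈ S, 0 ≤ g x := fun x hx => (hg x (hSY x hx)).le
  have hnorm : ∑' x, g x * w x * φ x ^ 2 = ∑ x ∈ S, g x * w x * φ x ^ 2 :=
    tsum_eq_sum fun x hx => by simp [hS x hx]
  have heikonal : ∑' x, ∑' y, b x y * φ x * φ y * (√(g x) - √(g y)) ^ 2 =
      ∑ x ∈ S, ∑ y ∈ S, b x y * φ x * φ y * (√(g x) - √(g y)) ^ 2 := by
    rw [tsum_congr fun x => tsum_eq_sum fun y hy => by simp [hS y hy]]
    exact tsum_eq_sum fun x hx => Finset.sum_eq_zero fun y _ => by simp [hS x hx]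
  have hlap : (∑' x, if φ x = 0 then 0 else (g x / w x) * (∑' y, b x y * (φ x - φ y)) ^ 2) =
      ∑ x ∈ S, g x / w x * WeightedGraph.laplacian b φ x ^ 2 := by
    rw [tsum_eq_sum fun x hx => by simp [hS x hx]]
    exact Finset.sum_congr rfl fun x hx => by
      simp [(by simpa [S] using hx : φ x ≠ 0), WeightedGraph.laplacian]
  have henergy := WeightedGraph.sum_mul_mul_sq_le_of_hardy hsymm hloc hHardy
    (fun x hx => (hg x hx).le) hS hφY
  have hCS := Finset.sum_mul_mul_le_sqrt_mul_sqrt S hgS (fun x hx => hw x (hSY x hx)) φ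
    (WeightedGraph.laplacian b φ)
  rw [hnorm, heikonal] at hweak
  rw [hlap, hnorm, ge_iff_le]
  refine Real.mul_sqrt_le_of_mul_le_mul_sqrt (Real.sqrt_nonneg _)
    (Finset.sum_nonneg fun x hx => ?_) (by linarith)
  have := hw x (hSY x hx); have := hgS x hx; positivity

theorem stmt3
    (X : Type*) [Countable X]
    (b : X → X → ℝ)
    (hsymm : ∀ x y, b x y = b y x)
    (hdiag : ∀ x, b x x = 0)
    (hnonneg : ∀ x y, 0 ≤ b x y)
    (hloc : ∀ x, Summable (fun y => b x y))
    (Y : Set X)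
    (w : X → ℝ) (hw : ∀ x ∈ Y, 0 < w x)
    (hHardy : ∀ ψ : X → ℝ, (Function.support ψ).Finite →
      Function.support ψ ⊆ Y →
      (∑' x, (1 / 2) * ∑' y, b x y * (ψ x - ψ y) ^ 2)
        ≥ ∑' x, if x ∈ Y then w x * ψ x ^ 2 else 0)
    (g : X → ℝ) (hg : ∀ x ∈ Y, 0 < g x)
    (hgF : ∀ x ∈ Y, Summable (fun y => b x y * |g y|))
    (γ : ℝ) (hγ0 : 0 < γ) (hγ1 : γ < 1)
    (φ : X → ℝ) (hφ : (Function.support φ).Finite)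
    (hφY : Function.support φ ⊆ Y)
    (hweak : (1 / 2) * (∑' x, ∑' y,
        b x y * φ x * φ y * (Real.sqrt (g x) - Real.sqrt (g y)) ^ 2)
      ≤ γ * ∑' x, g x * w x * φ x ^ 2) :
    Real.sqrt (∑' x, if φ x = 0 then 0 else
        (g x / w x) * (∑' y, b x y * (φ x - φ y)) ^ 2)
      ≥ (1 - γ) * Real.sqrt (∑' x, g x * w x * φ x ^ 2) :=
  stmt3_general X b hsymm hloc Y w hw hHardy g hg γ φ hφ hφY hweak
end

section
/- Define ϑ(a,t) = ((1 − log(at+1)/log(t+1))/(1−a))² for a ≠ 1 and ϑ(1,t) = t²/((t+1)² log²(t+1)), for a,t > 0. Then for each fixed t > 0, the map a ↦ ϑ(a,t) is strictly monotonically decreasing on (0,∞). -/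
open Real Classical

/-!
With `g a = log (a * t + 1)` and `L = log (t + 1)`, one has `ϑ(a, t) = (s a / L) ^ 2`, where
`s a = (g a - g 1) / (a - 1)` is the secant slope of `g` through `1`, and `s 1 = g' 1 = t / (t + 1)`.
Since `g` is strictly concave, `s` is strictly decreasing; since `g` is strictly increasing,
`s` is positive, so `(s / L) ^ 2` is strictly decreasing as well.
-/

open Function Set

lemma strictConcaveOn_log_mul_add_one {t : ℝ} (ht : 0 < t) :
    StrictConcaveOn ℝ (Ioi 0) (fun a => log (a * t + 1)) := by
  refine ⟨convex_Ioi 0, fun x (hx : 0 < x) y (hy : 0 < y) hxy a b ha hb hab => ?_⟩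
  have hne : x * t + 1 ≠ y * t + 1 := by simpa [ht.ne'] using hxy
  have := strictConcaveOn_log_Ioi.2 (by positivity : 0 < x * t + 1)
    (by positivity : 0 < y * t + 1) hne ha hb hab
  convert this using 2
  simp only [smul_eq_mul]
  linear_combination -hab

lemma strictMonoOn_log_mul_add_one {t : ℝ} (ht : 0 < t) :
    StrictMonoOn (fun a => log (a * t + 1)) (Ioi 0) := fun x (hx : 0 < x) y _ hxy =>
  log_lt_log (by positivity) (by gcongr)

lemma hasDerivAt_log_mul_add_one {t : ℝ} (ht : t + 1 ≠ 0) :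
    HasDerivAt (fun a => log (a * t + 1)) (t / (t + 1)) 1 := by
  simpa using (((hasDerivAt_id (1 : ℝ)).mul_const t).add_const 1).log (by simpa using ht)

theorem StrictConcaveOn.strictAntiOn_update_slope {S : Set ℝ} {f : ℝ → ℝ} {x₀ f' : ℝ}
    (hf : StrictConcaveOn ℝ S f) (hx₀ : x₀ ∈ S) (hf' : HasDerivAt f f' x₀) :
    StrictAntiOn (update (slope f x₀) x₀ f') S := by
  intro a ha b hb hab
  rcases eq_or_ne a x₀ with rfl | ha₀
  · rw [update_self, update_of_ne hab.ne']
    exact hf.slope_lt_of_hasDerivAt ha hb hab hf'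
  rcases eq_or_ne b x₀ with rfl | hb₀
  · rw [update_self, update_of_ne ha₀, slope_comm]
    exact hf.lt_slope_of_hasDerivAt ha hb hab hf'
  · rw [update_of_ne ha₀, update_of_ne hb₀, slope_def_field, slope_def_field]
    exact hf.secant_strict_mono hx₀ ha hb ha₀ hb₀ hab

noncomputable def logSecantSlope (t : ℝ) : ℝ → ℝ :=
  update (slope (fun a => log (a * t + 1)) 1) 1 (t / (t + 1))

lemma strictAntiOn_logSecantSlope {t : ℝ} (ht : 0 < t) :
    StrictAntiOn (logSecantSlope t) (Ioi 0) :=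
  (strictConcaveOn_log_mul_add_one ht).strictAntiOn_update_slope (mem_Ioi.2 one_pos)
    (hasDerivAt_log_mul_add_one (by positivity))

lemma logSecantSlope_pos {t a : ℝ} (ht : 0 < t) (ha : 0 < a) : 0 < logSecantSlope t a := by
  rcases eq_or_ne a 1 with rfl | ha₁
  · rw [logSecantSlope, update_self]
    positivity
  · rw [logSecantSlope, update_of_ne ha₁]
    exact (strictMonoOn_log_mul_add_one ht).slope_pos (mem_Ioi.2 one_pos) ha ha₁.symm

lemma ite_eq_logSecantSlope_div_log_sq {t : ℝ} (hL : log (t + 1) ≠ 0) (a : ℝ) :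
    (if a = 1 then t ^ 2 / ((t + 1) ^ 2 * log (t + 1) ^ 2)
      else ((1 - log (a * t + 1) / log (t + 1)) / (1 - a)) ^ 2) =
      (logSecantSlope t a / log (t + 1)) ^ 2 := by
  rcases eq_or_ne a 1 with rfl | ha₁
  · rw [if_pos rfl, logSecantSlope, update_self, div_pow, div_pow, div_div]
  · have : 1 - a ≠ 0 := sub_ne_zero.2 ha₁.symm
    rw [if_neg ha₁, logSecantSlope, update_of_ne ha₁, slope_def_field, one_mul]
    field_simp
    ring

theorem stmt9
    (t : ℝ) (ht : 0 < t) :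
    StrictAntiOn
      (fun a : ℝ => if a = 1
        then t ^ 2 / ((t + 1) ^ 2 * (Real.log (t + 1)) ^ 2)
        else ((1 - Real.log (a * t + 1) / Real.log (t + 1)) / (1 - a)) ^ 2)
      (Set.Ioi (0 : ℝ)) := by
  have hL : 0 < log (t + 1) := log_pos (by linarith)
  intro a ha b hb hab
  simp only [ite_eq_logSecantSlope_div_log_sq hL.ne']
  have hlt : logSecantSlope t b < logSecantSlope t a := strictAntiOn_logSecantSlope ht ha hb hab
  have hpos : 0 < logSecantSlope t b := logSecantSlope_pos ht hb
  gcongr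
end
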